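/- Let H be a separable Hilbert space and X ∈ L²(Ω;H). If the support of the law of X has cardinality at least N+1, then the optimal quantization error at level N+1 is strictly smaller than at level N: e_{N+1}(X,H) < e_N(X,H). -/

import Mathlib

open MeasureTheory Metric

/-
If `S` is a set of `N + 1` points of the support, with minimal separation `d > 0`, then any
`N`-point codebook `Γ` leaves some `s ∈ S` at distance at least `d / 2` (pigeonhole).
Adding `s` to `Γ` lowers the squared distance to the codebook by at least `d² / 8` on the
event `X ∈ B(s, d / 8)`, whose probability is bounded below uniformly in `s ∈ S`. So the
mean squared distortion drops by a fixed `δ > 0`, and `e_{N+1}² + δ ≤ e_N²`.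
-/

theorem Real.sInf_lt_sInf_of_forall_exists_sq_add_le {A B : Set ℝ} {δ : ℝ} (hδ : 0 < δ)
    (hA : ∀ a ∈ A, 0 ≤ a) (hB : ∀ b ∈ B, 0 ≤ b) (hBne : B.Nonempty)
    (h : ∀ b ∈ B, ∃ a ∈ A, a ^ 2 + δ ≤ b ^ 2) :
    sInf A < sInf B := by
  have hA₀ : 0 ≤ sInf A := Real.sInf_nonneg hA
  have hsqrt_le : √(sInf A ^ 2 + δ) ≤ sInf B := by
    refine le_csInf hBne fun b hb => ?_
    obtain ⟨a, ha, hab⟩ := h b hb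
    have : sInf A ^ 2 ≤ a ^ 2 := pow_le_pow_left₀ hA₀ (csInf_le ⟨0, hA⟩ ha) 2
    exact (Real.sqrt_le_left (hB b hb)).2 (by linarith)
  calc sInf A < √(sInf A ^ 2 + δ) := (Real.lt_sqrt hA₀).2 (by linarith)
    _ ≤ sInf B := hsqrt_le

section PseudoMetric

variable {α : Type*} [PseudoMetricSpace α]

theorem Finset.exists_infsep_le_two_mul_infDist {S Γ : Finset α} (hΓ : Γ.Nonempty)
    (hcard : Γ.card < S.card) : ∃ s ∈ S, (S : Set α).infsep ≤ 2 * infDist s Γ := by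
  by_contra! hnear
  choose f hfΓ hf using fun x =>
    Γ.finite_toSet.isCompact.exists_infDist_eq_dist (Finset.coe_nonempty.2 hΓ) x
  obtain ⟨x, hx, y, hy, hxy, hfxy⟩ :=
    Finset.exists_ne_map_eq_of_card_lt_of_maps_to hcard fun a _ => hfΓ a
  have hx' := hf x ▸ hnear x hx
  have hy' := hf y ▸ hnear y hy
  have hsep := (S : Set α).infsep_le_dist_of_mem hx hy hxy
  have htri := dist_triangle_right x y (f x)
  rw [hfxy] at hx' htri
  linarith

theorem sq_infDist_insert_add_indicator_le {Γ : Set α} {s : α} {ρ : ℝ} (hΓ : Γ.Nonempty)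
    (hs : 4 * ρ ≤ infDist s Γ) (x : α) :
    infDist x (insert s Γ) ^ 2 + (ball s ρ).indicator (fun _ => 8 * ρ ^ 2) x ≤
      infDist x Γ ^ 2 := by
  by_cases hx : x ∈ ball s ρ
  · rw [Set.indicator_of_mem hx]
    have hxs : dist x s < ρ := hx
    have hnew : infDist x (insert s Γ) ≤ dist x s :=
      infDist_le_dist_of_mem (Set.mem_insert s Γ)
    -- `x` is within `ρ` of `s` but at least `3ρ` from `Γ`, and `(3ρ)² = ρ² + 8ρ²`
    have hold : infDist s Γ ≤ infDist x Γ + dist x s := by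
      simpa [dist_comm] using infDist_le_infDist_add_dist (x := s) (y := x) (s := Γ)
    nlinarith [infDist_nonneg (x := x) (s := insert s Γ), dist_nonneg (x := x) (y := s)]
  · rw [Set.indicator_of_notMem hx, add_zero]
    exact pow_le_pow_left₀ infDist_nonneg
      (infDist_le_infDist_of_subset (Set.subset_insert s Γ) hΓ) 2

variable {Ω : Type*} {mΩ : MeasurableSpace Ω}

noncomputable def distortion (μ : Measure Ω) (X : Ω → α) (Γ : Set α) : ℝ :=
  ∫ ω, infDist (X ω) Γ ^ 2 ∂μ

theorem distortion_nonneg (μ : Measure Ω) (X : Ω → α) (Γ : Set α) : 0 ≤ distortion μ X Γ :=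
  integral_nonneg fun _ => sq_nonneg _

end PseudoMetric

section Normed

variable {E Ω : Type*} [SeminormedAddCommGroup E] [MeasurableSpace E] [OpensMeasurableSpace E]
  {mΩ : MeasurableSpace Ω} {μ : Measure Ω} [IsFiniteMeasure μ] {X : Ω → E}

theorem integrable_sq_infDist (hXm : Measurable X) (hX2 : Integrable (fun ω => ‖X ω‖ ^ 2) μ)
    {Γ : Set E} (hΓ : Γ.Nonempty) : Integrable (fun ω => infDist (X ω) Γ ^ 2) μ := by
  obtain ⟨γ, hγ⟩ := hΓ
  have hmeas : Measurable fun ω => infDist (X ω) Γ ^ 2 :=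
    ((continuous_infDist_pt Γ).measurable.comp hXm).pow_const 2
  refine ((hX2.const_mul 2).add (integrable_const (2 * ‖γ‖ ^ 2))).mono'
    hmeas.aestronglyMeasurable (Filter.Eventually.of_forall fun ω => ?_)
  have hle : infDist (X ω) Γ ≤ ‖X ω‖ + ‖γ‖ :=
    (infDist_le_dist_of_mem hγ).trans (by simpa [dist_eq_norm] using norm_sub_le (X ω) γ)
  rw [Pi.add_apply, Real.norm_eq_abs, abs_of_nonneg (by positivity)]
  nlinarith [pow_le_pow_left₀ infDist_nonneg hle 2, sq_nonneg (‖X ω‖ - ‖γ‖)]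

theorem distortion_insert_add_le (hXm : Measurable X) (hX2 : Integrable (fun ω => ‖X ω‖ ^ 2) μ)
    {Γ : Set E} {s : E} {ρ : ℝ} (hΓ : Γ.Nonempty) (hs : 4 * ρ ≤ infDist s Γ) :
    distortion μ X (insert s Γ) + 8 * ρ ^ 2 * μ.real (X ⁻¹' ball s ρ) ≤ distortion μ X Γ := by
  have hball : MeasurableSet (X ⁻¹' ball s ρ) := hXm measurableSet_ball
  have hind : Integrable ((X ⁻¹' ball s ρ).indicator fun _ => 8 * ρ ^ 2) μ :=
    (integrable_const _).indicator hball
  have hmono := integral_mono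
    ((integrable_sq_infDist hXm hX2 (Set.insert_nonempty s Γ)).add hind)
    (integrable_sq_infDist hXm hX2 hΓ)
    fun ω => sq_infDist_insert_add_indicator_le hΓ hs (X ω)
  rwa [integral_add' (integrable_sq_infDist hXm hX2 (Set.insert_nonempty s Γ)) hind,
    integral_indicator_const _ hball, smul_eq_mul, mul_comm] at hmono

end Normed

theorem exists_pos_distortion_add_le_of_card_lt {E Ω : Type*} [NormedAddCommGroup E]
    [MeasurableSpace E] [OpensMeasurableSpace E] {mΩ : MeasurableSpace Ω} {μ : Measure Ω}
    [IsFiniteMeasure μ] {X : Ω → E} (hXm : Measurable X)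
    (hX2 : Integrable (fun ω => ‖X ω‖ ^ 2) μ) {S : Finset E} (hS : S.Nontrivial)
    (hSX : ∀ x ∈ S, ∀ ε : ℝ, 0 < ε → 0 < μ (X ⁻¹' ball x ε)) {N : ℕ} (hN : N < S.card) :
    ∃ δ > 0, ∀ Γ : Finset E, Γ.Nonempty → Γ.card ≤ N →
      ∃ Γ' : Finset E, Γ'.Nonempty ∧ Γ'.card ≤ N + 1 ∧
        distortion μ X Γ' + δ ≤ distortion μ X Γ := by
  classical
  set ρ := (S : Set E).infsep / 8 with hρ_def
  have hρ : 0 < ρ := by have := S.infsep_pos_iff_nontrivial.2 hS; positivity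
  obtain ⟨s₀, hs₀, hmin⟩ := S.exists_min_image (fun s => μ.real (X ⁻¹' ball s ρ)) hS.nonempty
  have hmass : 0 < μ.real (X ⁻¹' ball s₀ ρ) :=
    ENNReal.toReal_pos (hSX s₀ hs₀ ρ hρ).ne' (measure_ne_top μ _)
  refine ⟨8 * ρ ^ 2 * μ.real (X ⁻¹' ball s₀ ρ), by positivity, fun Γ hΓ hΓN => ?_⟩
  obtain ⟨s, hs, hfar⟩ := S.exists_infsep_le_two_mul_infDist hΓ (by omega)
  refine ⟨insert s Γ, Γ.insert_nonempty s, (Γ.card_insert_le s).trans (by omega), ?_⟩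
  calc distortion μ X (insert s Γ : Finset E) + 8 * ρ ^ 2 * μ.real (X ⁻¹' ball s₀ ρ)
      ≤ distortion μ X (insert s (Γ : Set E)) + 8 * ρ ^ 2 * μ.real (X ⁻¹' ball s ρ) := by
        rw [Finset.coe_insert]; gcongr _ + _ * ?_; exact hmin s hs
    _ ≤ distortion μ X Γ :=
        distortion_insert_add_le hXm hX2 (Finset.coe_nonempty.2 hΓ) (by linarith)

theorem quantization_error_strict_decrease_general
    {H Ω : Type*} [NormedAddCommGroup H]
    [MeasurableSpace H] [BorelSpace H]
    {mΩ : MeasurableSpace Ω} (μ : Measure Ω) [IsProbabilityMeasure μ]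
    (X : Ω → H) (hXm : Measurable X)
    (hX2 : Integrable (fun ω => ‖X ω‖ ^ 2) μ)
    (N : ℕ) (hN : 1 ≤ N)
    -- the support of the distribution of `X` has at least `N+1` points
    (hsupp : ∃ S : Finset H, S.card = N + 1 ∧
      ∀ x ∈ S, ∀ ε : ℝ, 0 < ε → 0 < μ (X ⁻¹' Metric.ball x ε)) :
    sInf {r : ℝ | ∃ Γ : Finset H, Γ.Nonempty ∧ Γ.card ≤ N + 1 ∧
        r = Real.sqrt (∫ ω, Metric.infDist (X ω) (Γ : Set H) ^ 2 ∂μ)} <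
      sInf {r : ℝ | ∃ Γ : Finset H, Γ.Nonempty ∧ Γ.card ≤ N ∧
        r = Real.sqrt (∫ ω, Metric.infDist (X ω) (Γ : Set H) ^ 2 ∂μ)} := by
  obtain ⟨S, hScard, hSX⟩ := hsupp
  obtain ⟨δ, hδ, hstep⟩ := exists_pos_distortion_add_le_of_card_lt hXm hX2
    (Finset.one_lt_card_iff_nontrivial.1 (by omega)) hSX (N := N) (by omega)
  refine Real.sInf_lt_sInf_of_forall_exists_sq_add_le hδ ?_ ?_ ?_ ?_
  · rintro _ ⟨Γ, -, -, rfl⟩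
    exact Real.sqrt_nonneg _
  · rintro _ ⟨Γ, -, -, rfl⟩
    exact Real.sqrt_nonneg _
  · exact ⟨_, {0}, Finset.singleton_nonempty 0, by simpa using hN, rfl⟩
  · rintro _ ⟨Γ, hΓ, hΓN, rfl⟩
    obtain ⟨Γ', hΓ', hΓ'N, hle⟩ := hstep Γ hΓ hΓN
    refine ⟨_, ⟨Γ', hΓ', hΓ'N, rfl⟩, ?_⟩
    calc √(distortion μ X Γ') ^ 2 + δ = distortion μ X Γ' + δ := by
          rw [Real.sq_sqrt (distortion_nonneg μ X Γ')]
      _ ≤ distortion μ X Γ := hle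
      _ = √(distortion μ X Γ) ^ 2 := (Real.sq_sqrt (distortion_nonneg μ X Γ)).symm

/-- if the support of the law of `X` contains at least `N+1` points,
then `e_{N+1}(X,H) < e_N(X,H)`, where
`e_N(X,H) = inf { (E d(X,Γ)²)^{1/2} : Γ ⊂ H nonempty, card Γ ≤ N }`. -/
theorem quantization_error_strict_decrease
    {H Ω : Type*} [NormedAddCommGroup H] [InnerProductSpace ℝ H]
    [TopologicalSpace.SeparableSpace H] [CompleteSpace H]
    [MeasurableSpace H] [BorelSpace H]
    {mΩ : MeasurableSpace Ω} (μ : Measure Ω) [IsProbabilityMeasure μ]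
    (X : Ω → H) (hXm : Measurable X)
    (hX2 : Integrable (fun ω => ‖X ω‖ ^ 2) μ)
    (N : ℕ) (hN : 1 ≤ N)
    -- the support of the distribution of `X` has at least `N+1` points
    (hsupp : ∃ S : Finset H, S.card = N + 1 ∧
      ∀ x ∈ S, ∀ ε : ℝ, 0 < ε → 0 < μ (X ⁻¹' Metric.ball x ε)) :
    sInf {r : ℝ | ∃ Γ : Finset H, Γ.Nonempty ∧ Γ.card ≤ N + 1 ∧
        r = Real.sqrt (∫ ω, Metric.infDist (X ω) (Γ : Set H) ^ 2 ∂μ)} <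
      sInf {r : ℝ | ∃ Γ : Finset H, Γ.Nonempty ∧ Γ.card ≤ N ∧
        r = Real.sqrt (∫ ω, Metric.infDist (X ω) (Γ : Set H) ^ 2 ∂μ)} :=
  quantization_error_strict_decrease_general (mΩ := mΩ) μ X hXm hX2 N hN hsupp
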